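/- For every integer r ≥ 1 and every natural number j with j < r, the coefficient β_j of q^j in P_r equals (j+1)(j+2)/2 + j(j+1) + j(j−1), which equals (5/2)j² + (3/2)j + 1. -/

import Mathlib

open Polynomial Finset

lemma coeff_range_sum (n k : ℕ) :
    (∑ i ∈ Finset.range n, (X : Polynomial ℤ) ^ i).coeff k = if k < n then 1 else 0 := by
  simp [Polynomial.finset_sum_coeff, Polynomial.coeff_X_pow, Finset.sum_ite_eq']

lemma coeff_Icc_sum (a b k : ℕ) :
    (∑ i ∈ Finset.Icc a b, (X : Polynomial ℤ) ^ i).coeff k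
      = if a ≤ k ∧ k ≤ b then 1 else 0 := by
  simp [Polynomial.finset_sum_coeff, Polynomial.coeff_X_pow, Finset.sum_ite_eq',
    Finset.mem_Icc]

lemma coeff_AB (r k : ℕ) (h : k < r) :
    (((∑ i ∈ Finset.range (r + 1), (X : Polynomial ℤ) ^ i) *
      (∑ i ∈ Finset.range r, (X : Polynomial ℤ) ^ i)).coeff k) = (k : ℤ) + 1 := by
  rw [Polynomial.coeff_mul]
  have e : ∀ x ∈ Finset.HasAntidiagonal.antidiagonal k,
      (∑ i ∈ Finset.range (r + 1), (X : Polynomial ℤ) ^ i).coeff x.1 *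
        (∑ i ∈ Finset.range r, (X : Polynomial ℤ) ^ i).coeff x.2 = 1 := by
    intro x hx
    rw [Finset.HasAntidiagonal.mem_antidiagonal] at hx
    rw [coeff_range_sum, coeff_range_sum, if_pos (by omega), if_pos (by omega)]
    norm_num
  rw [Finset.sum_congr rfl e, Finset.sum_const, Finset.Nat.card_antidiagonal,
    nsmul_eq_mul, mul_one]
  push_cast; ring

lemma gauss (m : ℕ) : (∑ k ∈ Finset.range m, ((k : ℤ) + 1)) * 2 = m * (m + 1) := by
  induction m with
  | zero => simp
  | succ n ih => rw [Finset.sum_range_succ, add_mul, ih]; push_cast; ring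

lemma sum_ite_lt (m n : ℕ) (h : m ≤ n) :
    ∑ k ∈ Finset.range n, (if k < m then ((k : ℤ) + 1) else 0)
      = ∑ k ∈ Finset.range m, ((k : ℤ) + 1) := by
  rw [← Finset.sum_subset (Finset.range_subset_range.2 h)
    (fun k _ h2 => if_neg (by rw [Finset.mem_range] at h2; omega))]
  exact Finset.sum_congr rfl fun k hk => if_pos (Finset.mem_range.1 hk)

/-- The Poincaré polynomial of `M̄_{0,2}(ℙ^r,2)` computed in the paper. -/
noncomputable def serrePoly (r : ℕ) : Polynomial ℤ :=
  (∑ i ∈ Finset.range (r + 1), (X : Polynomial ℤ) ^ i) *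
    (∑ i ∈ Finset.range r, (X : Polynomial ℤ) ^ i) *
    ((∑ i ∈ Finset.range (r + 3), (X : Polynomial ℤ) ^ i)
      + 2 * (∑ i ∈ Finset.Icc 1 (r + 1), (X : Polynomial ℤ) ^ i)
      + 2 * (∑ i ∈ Finset.Icc 2 r, (X : Polynomial ℤ) ^ i))

lemma coeff_serre (r : ℕ) (j : ℕ) (hj : j < r) :
    (serrePoly r).coeff j
      = (∑ k ∈ Finset.range (j + 1), ((k : ℤ) + 1))
        + 2 * (∑ k ∈ Finset.range j, ((k : ℤ) + 1))
        + 2 * (∑ k ∈ Finset.range (j - 1), ((k : ℤ) + 1)) := by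
  rw [serrePoly, Polynomial.coeff_mul]
  have step : ∀ x ∈ Finset.HasAntidiagonal.antidiagonal j,
      ((∑ i ∈ Finset.range (r + 1), (X : Polynomial ℤ) ^ i) *
        (∑ i ∈ Finset.range r, (X : Polynomial ℤ) ^ i)).coeff x.1 *
      ((∑ i ∈ Finset.range (r + 3), (X : Polynomial ℤ) ^ i)
        + 2 * (∑ i ∈ Finset.Icc 1 (r + 1), (X : Polynomial ℤ) ^ i)
        + 2 * (∑ i ∈ Finset.Icc 2 r, (X : Polynomial ℤ) ^ i)).coeff x.2
      = ((x.1 : ℤ) + 1) * (1 + 2 * (if 1 ≤ x.2 then (1:ℤ) else 0)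
          + 2 * (if 2 ≤ x.2 then (1:ℤ) else 0)) := by
    intro x hx
    rw [Finset.HasAntidiagonal.mem_antidiagonal] at hx
    rw [coeff_AB r x.1 (by omega)]
    congr 1
    simp only [Polynomial.coeff_add, Polynomial.coeff_ofNat_mul, coeff_range_sum,
      coeff_Icc_sum]
    rw [if_pos (by omega : x.2 < r + 3)]
    split_ifs <;> ring_nf <;> omega
  rw [Finset.sum_congr rfl step]
  rw [Finset.Nat.sum_antidiagonal_eq_sum_range_succ
    (fun a b => ((a : ℤ) + 1) * (1 + 2 * (if 1 ≤ b then (1:ℤ) else 0)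
      + 2 * (if 2 ≤ b then (1:ℤ) else 0)))]
  have e1 : ∀ k ∈ Finset.range (j + 1),
      ((k : ℤ) + 1) * (1 + 2 * (if 1 ≤ j - k then (1:ℤ) else 0)
        + 2 * (if 2 ≤ j - k then (1:ℤ) else 0))
      = ((k : ℤ) + 1) + 2 * (if k < j then ((k : ℤ) + 1) else 0)
        + 2 * (if k < j - 1 then ((k : ℤ) + 1) else 0) := by
    intro k hk
    rw [Finset.mem_range] at hk
    split_ifs <;> ring_nf <;> omega
  rw [Finset.sum_congr rfl e1]
  simp only [Finset.sum_add_distrib]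
  rw [← Finset.mul_sum, ← Finset.mul_sum,
    sum_ite_lt j (j + 1) (by omega), sum_ite_lt (j - 1) (j + 1) (by omega)]
  simp only [Finset.sum_add_distrib, mul_add]

/-- For `j < r`, the `j`-th Betti number of `M̄_{0,2}(ℙ^r,2)` is
`(j+1)(j+2)/2 + j(j+1) + j(j-1) = (5/2)j² + (3/2)j + 1`. -/
theorem stmt_17 (r : ℕ) (hr : 1 ≤ r) (j : ℕ) (hj : j < r) :
    (((serrePoly r).coeff j : ℚ)
        = ((j : ℚ) + 1) * ((j : ℚ) + 2) / 2 + (j : ℚ) * ((j : ℚ) + 1)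
          + (j : ℚ) * ((j : ℚ) - 1)) ∧
    (((serrePoly r).coeff j : ℚ) = 5/2 * (j : ℚ) ^ 2 + 3/2 * (j : ℚ) + 1) := by
  have h := coeff_serre r j hj
  have h2 : ((serrePoly r).coeff j) * 2
      = ((j : ℤ) + 1) * ((j : ℤ) + 2) + 2 * ((j : ℤ) * ((j : ℤ) + 1))
        + 2 * (((j - 1 : ℕ) : ℤ) * (((j - 1 : ℕ) : ℤ) + 1)) := by
    rw [h]
    have g1 := gauss (j + 1)
    have g2 := gauss j
    have g3 := gauss (j - 1)
    push_cast at g1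
    nlinarith [g1, g2, g3]
  have h3 : (((serrePoly r).coeff j : ℚ)) * 2
      = ((j : ℚ) + 1) * ((j : ℚ) + 2) + 2 * ((j : ℚ) * ((j : ℚ) + 1))
        + 2 * (((j - 1 : ℕ) : ℚ) * (((j - 1 : ℕ) : ℚ) + 1)) := by
    exact_mod_cast congrArg (fun z : ℤ => (z : ℚ)) h2
  have key : ((serrePoly r).coeff j : ℚ) = 5/2 * (j : ℚ) ^ 2 + 3/2 * (j : ℚ) + 1 := by
    rcases Nat.eq_zero_or_pos j with hz | hp
    · subst hz; simp at h3 ⊢; linarith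
    · have hc : ((j - 1 : ℕ) : ℚ) = (j : ℚ) - 1 := by
        rw [Nat.cast_sub hp]; norm_num
      rw [hc] at h3
      linear_combination h3 / 2
  exact ⟨by rw [key]; ring, key⟩
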